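/- arXiv:1905.09097 — 2 statements merged into one kernel-verified Lean document; each statement's English description precedes it below -/
import Mathlib

section
/- Fix an integer d ≤ 1 and let g(z) = z^{(4-d)/8} (a fixed branch on the sector D = {r e^{iθ} : 0 < r < r₀, 0 < θ < 4π/(4-d)}). If z : (a,b) → D is a differentiable curve satisfying z'(t) = e^{i dθ(t)/4}, where θ(t) = arg z(t), then the curve w(t) = g(z(t)), written in polar form w = ρ e^{iφ}, satisfies arg w'(t) = -φ(t) (modulo 2π) whenever w'(t) ≠ 0. -/
open Real Set

/-!
Since `8 · (4-d)/8 = 4-d`, the curves satisfy `w⁸ = z^(4-d)`; differentiating this identity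
gives `w' = β (w / z) z'` with `β = (4-d)/8`, which is the chain rule `w' = g'(z) z'` without
having to choose a branch of `g` along the curve or differentiate `r` and `θ`. In polar form
`w / z = r^(β-1) e^{i(β-1)θ}` and `z' = e^{i(1-2β)θ}`, so `w' = β r^(β-1) e^{-iβθ}` with a
positive modulus.
-/

open Topology

theorem natCast_mul_pow_sub_one_mul {R : Type*} [CommSemiring R] (n : ℕ) (x : R) :
    (n : R) * x ^ (n - 1) * x = n * x ^ n := by
  rcases Nat.eq_zero_or_pos n with rfl | hn
  · simp
  · rw [mul_assoc, pow_sub_one_mul hn.ne']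

namespace Complex

theorem exists_arg_ofReal_mul_exp_mul_I {c : ℝ} (hc : 0 < c) (x : ℝ) :
    ∃ m : ℤ, arg (c * exp (x * I)) = x + 2 * π * m := by
  refine ⟨-toIocDiv two_pi_pos (-π) x, ?_⟩
  rw [arg_real_mul _ hc, arg_exp_mul_I, ← self_sub_toIocDiv_zsmul, zsmul_eq_mul]
  push_cast
  ring

theorem ofReal_rpow_mul_exp_mul_I {r : ℝ} (hr : 0 < r) (β θ : ℝ) :
    ((r ^ β : ℝ) : ℂ) * exp ((β * θ : ℝ) * I) = exp (β * (Real.log r + θ * I)) := by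
  rw [rpow_def_of_pos hr, ofReal_exp, ← exp_add]
  push_cast
  ring_nf

theorem natCast_mul_deriv_eq_of_pow_eq {p n : ℕ} {z w : ℝ → ℂ} {z' w' : ℂ} {t : ℝ}
    (hz : HasDerivAt z z' t) (hw : HasDerivAt w w' t)
    (hpow : ∀ᶠ s in 𝓝 t, w s ^ p = z s ^ n) (hz0 : z t ≠ 0) :
    p * z t * w' = n * w t * z' := by
  have hderiv : (p : ℂ) * w t ^ (p - 1) * w' = n * z t ^ (n - 1) * z' :=
    ((hasDerivAt_pow p (w t)).comp t hw).unique
      (((hasDerivAt_pow n (z t)).comp t hz).congr_of_eventuallyEq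
        (hpow.mono fun s hs => by simp only [Function.comp_apply, hs]))
  apply mul_left_cancel₀ (pow_ne_zero n hz0)
  calc z t ^ n * (p * z t * w') = (p * w t ^ (p - 1) * w t) * z t * w' := by
        rw [natCast_mul_pow_sub_one_mul, hpow.self_of_nhds]; ring
    _ = (p * w t ^ (p - 1) * w') * w t * z t := by ring
    _ = (n * z t ^ (n - 1) * z') * w t * z t := by rw [hderiv]
    _ = (n * z t ^ (n - 1) * z t) * w t * z' := by ring
    _ = z t ^ n * (n * w t * z') := by rw [natCast_mul_pow_sub_one_mul]; ring

/-- The chain rule `w' = β z^(β-1) z'` for `w = z^β` with rational `β`, where the branch of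
`z^β` is only prescribed pointwise through a logarithm `L` of `z` (no regularity of `L`). -/
theorem deriv_eq_mul_exp_mul_of_eq_exp_rat_mul {p n : ℕ} (hp : p ≠ 0) {β : ℂ}
    (hβ : (p : ℂ) * β = n) {z w L : ℝ → ℂ} {z' w' : ℂ} {t : ℝ}
    (hz : HasDerivAt z z' t) (hw : HasDerivAt w w' t)
    (hzL : ∀ᶠ s in 𝓝 t, z s = exp (L s)) (hwL : ∀ᶠ s in 𝓝 t, w s = exp (β * L s)) :
    w' = β * exp ((β - 1) * L t) * z' := by
  have hpow : ∀ᶠ s in 𝓝 t, w s ^ p = z s ^ n := by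
    filter_upwards [hzL, hwL] with s hzs hws
    rw [hzs, hws, ← exp_nat_mul, ← exp_nat_mul, ← mul_assoc, hβ]
  have hmul := natCast_mul_deriv_eq_of_pow_eq hz hw hpow (hzL.self_of_nhds ▸ exp_ne_zero _)
  rw [hzL.self_of_nhds, hwL.self_of_nhds] at hmul
  have hexp : exp (β * L t) = exp ((β - 1) * L t) * exp (L t) := by
    rw [← exp_add]; ring_nf
  apply mul_left_cancel₀ (mul_ne_zero (Nat.cast_ne_zero.mpr hp) (exp_ne_zero (L t)))
  rw [hmul, hexp, ← hβ]
  ring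

end Complex

open Complex

theorem stmt_3_general (d : ℤ) (hd : d ≤ 1) (r₀ : ℝ) (a b : ℝ)
    (r θ : ℝ → ℝ) (z w : ℝ → ℂ)
    (hz : ∀ t ∈ Ioo a b, z t = (r t : ℂ) * Complex.exp ((θ t : ℂ) * Complex.I))
    (hr : ∀ t ∈ Ioo a b, r t ∈ Ioo 0 r₀)
    (hz' : ∀ t ∈ Ioo a b,
      HasDerivAt z (Complex.exp ((((d : ℝ) / 4 * θ t : ℝ) : ℂ) * Complex.I)) t)
    (hw : ∀ t ∈ Ioo a b,
      w t = ((r t ^ ((4 - (d : ℝ)) / 8) : ℝ) : ℂ)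
        * Complex.exp ((((4 - (d : ℝ)) / 8 * θ t : ℝ) : ℂ) * Complex.I))
    (t : ℝ) (ht : t ∈ Ioo a b) (w' : ℂ) (hw' : HasDerivAt w w' t) :
    ∃ m : ℤ, Complex.arg w' = -((4 - (d : ℝ)) / 8 * θ t) + 2 * π * m := by
  set β : ℝ := (4 - (d : ℝ)) / 8
  obtain ⟨n, hn⟩ : ∃ n : ℕ, (n : ℤ) = 4 - d := ⟨(4 - d).toNat, Int.toNat_of_nonneg (by omega)⟩
  have hnβ : ((8 : ℕ) : ℂ) * β = n := by
    have hnR : (n : ℝ) = 4 - d := by exact_mod_cast hn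
    exact_mod_cast (show (8 : ℝ) * β = n by rw [hnR]; ring)
  have hβ : 0 < β := by
    have hdR : (d : ℝ) ≤ 1 := by exact_mod_cast hd
    simp only [β]; linarith
  set L : ℝ → ℂ := fun s => Real.log (r s) + θ s * I
  have hIoo : ∀ᶠ s in 𝓝 t, s ∈ Ioo a b := Ioo_mem_nhds ht.1 ht.2
  have hzL : ∀ᶠ s in 𝓝 t, z s = exp (L s) := hIoo.mono fun s hs => by
    simpa only [rpow_one, one_mul, ofReal_one, ← hz s hs]
      using ofReal_rpow_mul_exp_mul_I (hr s hs).1 1 (θ s)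
  have hwL : ∀ᶠ s in 𝓝 t, w s = exp (β * L s) := hIoo.mono fun s hs =>
    (hw s hs).trans (ofReal_rpow_mul_exp_mul_I (hr s hs).1 β (θ s))
  have hpolar : w' = ((β * Real.exp ((β - 1) * Real.log (r t)) : ℝ) : ℂ)
      * exp ((-(β * θ t) : ℝ) * I) := by
    rw [deriv_eq_mul_exp_mul_of_eq_exp_rat_mul (by norm_num) hnβ (hz' t ht) hw' hzL hwL,
      mul_assoc, ← Complex.exp_add, ofReal_mul β, ofReal_exp, mul_assoc, ← Complex.exp_add]
    congr 2
    simp only [L, β]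
    push_cast
    ring
  rw [hpolar]
  exact exists_arg_ofReal_mul_exp_mul_I (by positivity) _

/-- Under the conformal map `g(z) = z^{(4-d)/8}` (in the polar branch
`r e^{iθ} ↦ r^β e^{iβθ}`, `β = (4-d)/8`), a streamline of the local singularity model
`z' = e^{i dθ/4}` satisfies `arg w'(t) = -φ(t) (mod 2π)`, where `φ = β θ` is the
argument of `w = g ∘ z`. -/
theorem stmt_3 (d : ℤ) (hd : d ≤ 1) (r₀ : ℝ) (hr₀ : 0 < r₀) (a b : ℝ)
    (r θ : ℝ → ℝ) (z w : ℝ → ℂ)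
    (hz : ∀ t ∈ Ioo a b, z t = (r t : ℂ) * Complex.exp ((θ t : ℂ) * Complex.I))
    (hr : ∀ t ∈ Ioo a b, r t ∈ Ioo 0 r₀)
    (hθ : ∀ t ∈ Ioo a b, θ t ∈ Ioo 0 (4 * π / (4 - (d : ℝ))))
    (hz' : ∀ t ∈ Ioo a b,
      HasDerivAt z (Complex.exp ((((d : ℝ) / 4 * θ t : ℝ) : ℂ) * Complex.I)) t)
    (hw : ∀ t ∈ Ioo a b,
      w t = ((r t ^ ((4 - (d : ℝ)) / 8) : ℝ) : ℂ)
        * Complex.exp ((((4 - (d : ℝ)) / 8 * θ t : ℝ) : ℂ) * Complex.I))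
    (t : ℝ) (ht : t ∈ Ioo a b) (w' : ℂ) (hw' : HasDerivAt w w' t) (hne : w' ≠ 0) :
    ∃ m : ℤ, Complex.arg w' = -((4 - (d : ℝ)) / 8 * θ t) + 2 * π * m :=
  stmt_3_general d hd r₀ a b r θ z w hz hr hz' hw t ht w' hw'
end

section
/- In the sector D = {r e^{iθ} : 0 < r < r₀, 0 < θ < 4π/(4−d)} with integer d ≤ 1, the image of the solution curve of z' = e^{i dθ/4}, z(0) = r_q e^{iθ_q}, under g(z) = z^{(4−d)/8} lies in the hyperbola {x + iy : x, y > 0, xy = A_q} with A_q = r_q^{(4−d)/4} sin((4−d)θ_q/8) cos((4−d)θ_q/8). -/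
open Real Set

private lemma const_of_deriv_zero' {a b : ℝ} {f : ℝ → ℝ}
    (hf : ∀ t ∈ Ioo a b, HasDerivAt f 0 t) :
    ∀ s ∈ Ioo a b, ∀ t ∈ Ioo a b, s ≤ t → f s = f t := by
  intro s hs t ht hst
  have hsub : Icc s t ⊆ Ioo a b := Icc_subset_Ioo hs.1 ht.2
  have := constant_of_has_deriv_right_zero (f := f) (a := s) (b := t)
    (fun x hx => (hf x (hsub hx)).continuousAt.continuousWithinAt)
    (fun x hx => (hf x (hsub (Ico_subset_Icc_self hx))).hasDerivWithinAt)
  exact (this t (right_mem_Icc.2 hst)).symm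

private lemma const_of_deriv_zero {a b : ℝ} {f : ℝ → ℝ}
    (hf : ∀ t ∈ Ioo a b, HasDerivAt f 0 t) {s t : ℝ}
    (hs : s ∈ Ioo a b) (ht : t ∈ Ioo a b) : f s = f t := by
  rcases le_total s t with h | h
  · exact const_of_deriv_zero' hf s hs t ht h
  · exact (const_of_deriv_zero' hf t ht s hs h).symm

/-- Proposition 1 with explicit constant: in the sector
`D = {r e^{iθ} : 0 < r < r₀, 0 < θ < 4π/(4-d)}` (`d ≤ 1` an integer), the image under
`g(z) = z^{(4-d)/8}` (polar branch `r e^{iθ} ↦ r^β e^{iβθ}`, `β = (4-d)/8`) of the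
solution of `z' = e^{i dθ/4}` with `z(0) = r_q e^{iθ_q}` lies on the hyperbola
`{x + iy : x, y > 0, xy = A_q}` with
`A_q = r_q^{(4-d)/4} sin((4-d)θ_q/8) cos((4-d)θ_q/8)`. -/
theorem stmt_19 (d : ℤ) (hd : d ≤ 1) (r₀ : ℝ) (hr₀ : 0 < r₀) (a b : ℝ)
    (hab : a < 0) (hb : 0 < b)
    (rq θq : ℝ) (hrq : rq ∈ Ioo 0 r₀) (hθq : θq ∈ Ioo 0 (4 * π / (4 - (d : ℝ))))
    (r θ : ℝ → ℝ) (z : ℝ → ℂ)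
    (hz : ∀ t ∈ Ioo a b, z t = (r t : ℂ) * Complex.exp ((θ t : ℂ) * Complex.I))
    (hr : ∀ t ∈ Ioo a b, r t ∈ Ioo 0 r₀)
    (hθ : ∀ t ∈ Ioo a b, θ t ∈ Ioo 0 (4 * π / (4 - (d : ℝ))))
    (hz' : ∀ t ∈ Ioo a b,
      HasDerivAt z (Complex.exp ((((d : ℝ) / 4 * θ t : ℝ) : ℂ) * Complex.I)) t)
    (hinit : r 0 = rq ∧ θ 0 = θq) :
    ∀ t ∈ Ioo a b,
      ((r t ^ ((4 - (d : ℝ)) / 8) : ℝ)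
          * Real.cos ((4 - (d : ℝ)) / 8 * θ t))
        * ((r t ^ ((4 - (d : ℝ)) / 8) : ℝ)
          * Real.sin ((4 - (d : ℝ)) / 8 * θ t))
      = rq ^ ((4 - (d : ℝ)) / 4)
          * Real.sin ((4 - (d : ℝ)) * θq / 8) * Real.cos ((4 - (d : ℝ)) * θq / 8) := by
  have hd' : (d : ℝ) ≤ 1 := by exact_mod_cast hd
  set γ : ℝ := (4 - (d : ℝ)) / 4 with hγdef
  have h43 : (3 : ℝ) ≤ 4 - (d : ℝ) := by linarith
  have hγ : 0 < γ := by rw [hγdef]; linarith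
  -- θ bounds
  have hθ2 : ∀ t ∈ Ioo a b, 0 < θ t ∧ θ t < 2 * π := by
    intro t ht
    refine ⟨(hθ t ht).1, lt_of_lt_of_le (hθ t ht).2 ?_⟩
    have h1 : 4 * π / (4 - (d : ℝ)) ≤ 4 * π / 3 :=
      div_le_div_of_nonneg_left (by positivity) (by norm_num) h43
    nlinarith [pi_pos]
  -- z as a single exponential
  have hzexp : ∀ t ∈ Ioo a b,
      z t = Complex.exp ((Real.log (r t) : ℂ) + (θ t : ℂ) * Complex.I) := by
    intro t ht
    rw [hz t ht, Complex.exp_add, ← Complex.ofReal_exp, Real.exp_log (hr t ht).1]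
  -- log formula
  have hlog : ∀ t ∈ Ioo a b,
      Complex.log (-(z t)) = (Real.log (r t) : ℂ) + ((θ t - π : ℝ) : ℂ) * Complex.I := by
    intro t ht
    have hne : -(z t) =
        Complex.exp ((Real.log (r t) : ℂ) + ((θ t - π : ℝ) : ℂ) * Complex.I) := by
      rw [hzexp t ht,
        show ((Real.log (r t) : ℂ) + (θ t : ℂ) * Complex.I)
          = ((Real.log (r t) : ℂ) + ((θ t - π : ℝ) : ℂ) * Complex.I) + (π : ℂ) * Complex.I by
            push_cast; ring,
        Complex.exp_add, Complex.exp_pi_mul_I]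
      ring
    rw [hne, Complex.log_exp]
    · simp [(hθ2 t ht).1]
    · have := (hθ2 t ht).2
      have : θ t - π ≤ π := by linarith
      simpa using this
  -- slit plane membership
  have hslit : ∀ t ∈ Ioo a b, -(z t) ∈ Complex.slitPlane := by
    intro t ht
    rw [Complex.mem_slitPlane_iff_arg]
    constructor
    · have harg : (-(z t)).arg = θ t - π := by
        have := congrArg Complex.im (hlog t ht)
        simpa [Complex.log_im] using this
      rw [harg]
      have := (hθ2 t ht).2
      intro h
      nlinarith [pi_pos]
    · rw [hz t ht]
      exact neg_ne_zero.2 (mul_ne_zero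
        (Complex.ofReal_ne_zero.2 (ne_of_gt (hr t ht).1)) (Complex.exp_ne_zero _))
  -- the function w
  set w : ℝ → ℂ := fun t =>
    Complex.exp ((γ : ℂ) * (Complex.log (-(z t)) + (π : ℂ) * Complex.I)) with hwdef
  have hwt : ∀ t ∈ Ioo a b,
      w t = Complex.exp ((γ * Real.log (r t) : ℝ) + ((γ * θ t : ℝ) : ℂ) * Complex.I) := by
    intro t ht
    rw [hwdef]
    simp only
    rw [hlog t ht]
    congr 1
    push_cast
    ring
  have hwim : ∀ t ∈ Ioo a b, (w t).im = r t ^ γ * Real.sin (γ * θ t) := by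
    intro t ht
    rw [hwt t ht, Complex.exp_im]
    have h1 : ((γ * Real.log (r t) : ℝ) + ((γ * θ t : ℝ) : ℂ) * Complex.I).re
        = γ * Real.log (r t) := by simp
    have h2 : ((γ * Real.log (r t) : ℝ) + ((γ * θ t : ℝ) : ℂ) * Complex.I).im
        = γ * θ t := by simp
    rw [h1, h2, Real.rpow_def_of_pos (hr t ht).1, mul_comm (Real.log (r t)) γ]
  -- derivative of w is real
  have hw' : ∀ t ∈ Ioo a b, HasDerivAt (fun s => (w s).im) 0 t := by
    intro t ht
    have hneg : HasDerivAt (fun s => -(z s))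
        (-(Complex.exp ((((d : ℝ) / 4 * θ t : ℝ) : ℂ) * Complex.I))) t := (hz' t ht).neg
    have hlogd' := HasDerivAt.scomp (h := fun s => -(z s)) (x := t)
      (Complex.hasDerivAt_log (hslit t ht)) hneg
    have hlogd : HasDerivAt (fun s => Complex.log (-(z s)))
        ((-(Complex.exp ((((d : ℝ) / 4 * θ t : ℝ) : ℂ) * Complex.I))) • (-(z t))⁻¹) t := by
      simpa [Function.comp_def] using hlogd'
    have hD : HasDerivAt w
        (Complex.exp ((γ : ℂ) * (Complex.log (-(z t)) + (π : ℂ) * Complex.I))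
          * ((γ : ℂ) * ((-(Complex.exp ((((d : ℝ) / 4 * θ t : ℝ) : ℂ) * Complex.I)))
              • (-(z t))⁻¹))) t := by
      exact ((hlogd.add_const ((π : ℂ) * Complex.I)).const_mul (γ : ℂ)).cexp
    have hval : Complex.exp ((γ : ℂ) * (Complex.log (-(z t)) + (π : ℂ) * Complex.I))
          * ((γ : ℂ) * ((-(Complex.exp ((((d : ℝ) / 4 * θ t : ℝ) : ℂ) * Complex.I)))
              • (-(z t))⁻¹))
        = ((γ * r t ^ (γ - 1) : ℝ) : ℂ) := by
      have hwe : Complex.exp ((γ : ℂ) * (Complex.log (-(z t)) + (π : ℂ) * Complex.I)) = w t := rfl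
      rw [hwe, hwt t ht, smul_eq_mul, hzexp t ht, inv_neg, neg_mul_neg, ← Complex.exp_neg,
        ← Complex.exp_add, mul_comm ((γ : ℂ)) _, ← mul_assoc, ← Complex.exp_add]
      have hexp : ((γ * Real.log (r t) : ℝ) : ℂ) + ((γ * θ t : ℝ) : ℂ) * Complex.I
            + ((((d : ℝ) / 4 * θ t : ℝ) : ℂ) * Complex.I
              + -((Real.log (r t) : ℂ) + (θ t : ℂ) * Complex.I))
          = (((γ - 1) * Real.log (r t) : ℝ) : ℂ) := by
        rw [hγdef]
        push_cast
        ring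
      rw [hexp, ← Complex.ofReal_exp]
      have hre : Real.exp ((γ - 1) * Real.log (r t)) * γ = γ * r t ^ (γ - 1) := by
        rw [Real.rpow_def_of_pos (hr t ht).1, mul_comm (Real.log (r t))]; ring
      exact_mod_cast congrArg (fun x : ℝ => (x : ℂ)) hre
    rw [hval] at hD
    have := (Complex.imCLM.hasFDerivAt.comp_hasDerivAt t hD)
    simpa [Function.comp_def] using this
  -- main computation
  intro t ht
  have h0 : (0 : ℝ) ∈ Ioo a b := ⟨hab, hb⟩
  have hconst : (w t).im = (w 0).im := const_of_deriv_zero hw' ht h0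
  rw [hwim t ht, hwim 0 h0, hinit.1, hinit.2] at hconst
  have hβ : (4 - (d : ℝ)) / 8 + (4 - (d : ℝ)) / 8 = γ := by rw [hγdef]; ring
  have hrt : 0 < r t := (hr t ht).1
  have hL : r t ^ ((4 - (d : ℝ)) / 8) * Real.cos ((4 - (d : ℝ)) / 8 * θ t)
      * (r t ^ ((4 - (d : ℝ)) / 8) * Real.sin ((4 - (d : ℝ)) / 8 * θ t))
      = (1 / 2) * (r t ^ γ * Real.sin (γ * θ t)) := by
    rw [← hβ, Real.rpow_add hrt]
    have : (((4 - (d : ℝ)) / 8 + (4 - (d : ℝ)) / 8) * θ t)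
        = 2 * ((4 - (d : ℝ)) / 8 * θ t) := by ring
    rw [this, Real.sin_two_mul]
    ring
  have hR : rq ^ ((4 - (d : ℝ)) / 4) * Real.sin ((4 - (d : ℝ)) * θq / 8)
        * Real.cos ((4 - (d : ℝ)) * θq / 8)
      = (1 / 2) * (rq ^ γ * Real.sin (γ * θq)) := by
    have : γ * θq = 2 * ((4 - (d : ℝ)) * θq / 8) := by rw [hγdef]; ring
    rw [this, Real.sin_two_mul, hγdef]
    ring
  rw [hL, hR, hconst]
end
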